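/- Let M, N, N₁ be positive integers with N₁ ≤ N, and for n₁ = 1, …, N₁ let h_{n₁} ∈ ℂ^M, ζ_{n₁} ≥ 0, and σ_a ∈ ℝ. Define p_{n₁}(w) = Σ_{η=1}^{N} |h_{n₁}^H w_η|² + σ_a², the max-min objective G(w, α) = min_{1 ≤ n₁ ≤ N₁} ζ_{n₁}(1 − α_{n₁}²)·p_{n₁}(w), and the surrogate Ĝ(w, α) = min_{1 ≤ n₁ ≤ N₁} ζ_{n₁}·p̆_{n₁}(w, α_{n₁}) at a fixed point (ŵ, α̂) with α̂ ∈ (0,1)^{N₁}, where p̆_{n₁}(w, α) = 2(1−α̂_{n₁}²)[Σ_η Re(conj(h_{n₁}^H ŵ_η)·(h_{n₁}^H w_η)) + σ_a²] − p_{n₁}(ŵ)(1−α̂_{n₁}²)²/(1−α²). Then for any (w, α) with α ∈ (0,1)^{N₁}, if Ĝ(w, α) ≥ Ĝ(ŵ, α̂), then G(w, α) ≥ G(ŵ, α̂). -/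

import Mathlib

/-!
Per user, the surrogate `breve` is a minorant of the harvested energy `(1 - α²) p(w)` that
touches it at `(wh, αh)`. With `a = 1 - αh²` and `b = 1 - α²`, expanding
`∑ η, ‖a • h^H wh_η - b • h^H w_η‖² + (a - b)² σa² ≥ 0` gives
`2 a b · rfCrossPower wh w ≤ a² p(wh) + b² p(w)`, and dividing by `b > 0` gives
`breve ≤ (1 - α²) p(w)`. Weighting by `ζ ≥ 0` and taking minima preserves both facts, so
`G(wh, αh) = Ĝ(wh, αh) ≤ Ĝ(w, α) ≤ G(w, α)`.
-/

/-- Hermitian inner product `h^H w = ∑ i, conj (h i) * w i` on `ℂ^M`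
(conjugate-linear in `h`). -/
noncomputable def hermInner {M : ℕ} (h w : Fin M → ℂ) : ℂ :=
  ∑ i, (starRingEnd ℂ) (h i) * w i

/-- Total received RF power `p(w) = ∑ η, |h^H w_η|² + σa²`. -/
noncomputable def rfPower {M N : ℕ} (h : Fin M → ℂ) (σa : ℝ)
    (w : Fin N → Fin M → ℂ) : ℝ :=
  (∑ η, ‖hermInner h (w η)‖ ^ 2) + σa ^ 2

/-- Surrogate (minorant) of the harvested energy `(1 - α²) p(w)` obtained by
linearization at the point `(wh, αh)`. -/
noncomputable def breve {M N : ℕ} (h : Fin M → ℂ) (σa : ℝ)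
    (wh : Fin N → Fin M → ℂ) (αh : ℝ) (w : Fin N → Fin M → ℂ) (α : ℝ) : ℝ :=
  2 * (1 - αh ^ 2) *
      ((∑ η, ((starRingEnd ℂ) (hermInner h (wh η)) * hermInner h (w η)).re) + σa ^ 2) -
    rfPower h σa wh * (1 - αh ^ 2) ^ 2 / (1 - α ^ 2)

open ComplexConjugate

lemma Finset.inf'_le_inf'_of_minorant {ι α : Type*} [SemilatticeInf α] {s : Finset ι}
    (hs : s.Nonempty) {f g f₀ g₀ : ι → α} (hfg : ∀ i ∈ s, f i ≤ g i)
    (hfg₀ : ∀ i ∈ s, f₀ i = g₀ i) (h : s.inf' hs f₀ ≤ s.inf' hs f) :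
    s.inf' hs g₀ ≤ s.inf' hs g :=
  calc s.inf' hs g₀ = s.inf' hs f₀ := (Finset.inf'_congr hs rfl hfg₀).symm
    _ ≤ s.inf' hs f := h
    _ ≤ s.inf' hs g := Finset.inf'_mono_fun hfg

lemma Complex.re_conj_mul_self (z : ℂ) : (conj z * z).re = ‖z‖ ^ 2 := by
  rw [← Complex.normSq_eq_conj_mul_self, Complex.ofReal_re, Complex.normSq_eq_norm_sq]

lemma Complex.two_mul_mul_re_conj_mul_le (a b : ℝ) (z y : ℂ) :
    2 * a * b * (conj z * y).re ≤ a ^ 2 * ‖z‖ ^ 2 + b ^ 2 * ‖y‖ ^ 2 := by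
  have h := norm_sub_sq_real (a • z) (b • y)
  rw [real_inner_smul_left, real_inner_smul_right, Complex.inner, norm_smul, norm_smul,
    mul_pow, mul_pow, Real.norm_eq_abs, Real.norm_eq_abs, sq_abs, sq_abs, mul_comm y] at h
  nlinarith [sq_nonneg ‖a • z - b • y‖]

noncomputable def rfCrossPower {M N : ℕ} (h : Fin M → ℂ) (σa : ℝ)
    (wh w : Fin N → Fin M → ℂ) : ℝ :=
  (∑ η, (conj (hermInner h (wh η)) * hermInner h (w η)).re) + σa ^ 2

section

variable {M N : ℕ} (h : Fin M → ℂ) (σa : ℝ)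

lemma rfCrossPower_self (w : Fin N → Fin M → ℂ) : rfCrossPower h σa w w = rfPower h σa w := by
  simp only [rfCrossPower, rfPower, Complex.re_conj_mul_self]

lemma two_mul_mul_rfCrossPower_le (a b : ℝ) (wh w : Fin N → Fin M → ℂ) :
    2 * a * b * rfCrossPower h σa wh w ≤ a ^ 2 * rfPower h σa wh + b ^ 2 * rfPower h σa w := by
  have hsum : 2 * a * b * ∑ η, (conj (hermInner h (wh η)) * hermInner h (w η)).re ≤
      a ^ 2 * ∑ η, ‖hermInner h (wh η)‖ ^ 2 + b ^ 2 * ∑ η, ‖hermInner h (w η)‖ ^ 2 := by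
    simp only [Finset.mul_sum, ← Finset.sum_add_distrib]
    exact Finset.sum_le_sum fun η _ => Complex.two_mul_mul_re_conj_mul_le a b _ _
  simp only [rfCrossPower, rfPower]
  nlinarith [sq_nonneg ((a - b) * σa)]

lemma breve_eq (wh : Fin N → Fin M → ℂ) (αh : ℝ) (w : Fin N → Fin M → ℂ) (α : ℝ) :
    breve h σa wh αh w α =
      2 * (1 - αh ^ 2) * rfCrossPower h σa wh w -
        rfPower h σa wh * (1 - αh ^ 2) ^ 2 / (1 - α ^ 2) :=
  rfl

lemma breve_self (w : Fin N → Fin M → ℂ) {α : ℝ} (hα : 1 - α ^ 2 ≠ 0) :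
    breve h σa w α w α = (1 - α ^ 2) * rfPower h σa w := by
  rw [breve_eq, rfCrossPower_self]
  field_simp
  ring

lemma breve_le (wh : Fin N → Fin M → ℂ) (αh : ℝ) (w : Fin N → Fin M → ℂ) {α : ℝ}
    (hα : 0 < 1 - α ^ 2) :
    breve h σa wh αh w α ≤ (1 - α ^ 2) * rfPower h σa w := by
  have key := two_mul_mul_rfCrossPower_le h σa (1 - αh ^ 2) (1 - α ^ 2) wh w
  rw [breve_eq, sub_le_iff_le_add, ← sub_le_iff_le_add', le_div_iff₀ hα]
  nlinarith

end

theorem maxmin_eh_monotone_improvement_general (M N N₁ : ℕ)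
    (h : Fin N₁ → Fin M → ℂ) (ζ : Fin N₁ → ℝ) (hζ : ∀ n, 0 ≤ ζ n) (σa : ℝ)
    (wh : Fin N → Fin M → ℂ) (αh : Fin N₁ → ℝ)
    (hαh : ∀ n, αh n ∈ Set.Ioo (0 : ℝ) 1)
    (w : Fin N → Fin M → ℂ) (α : Fin N₁ → ℝ)
    (hα : ∀ n, α n ∈ Set.Ioo (0 : ℝ) 1)
    (hne : (Finset.univ : Finset (Fin N₁)).Nonempty)
    (hsur : Finset.univ.inf' hne (fun n => ζ n * breve (h n) σa wh (αh n) w (α n)) ≥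
            Finset.univ.inf' hne (fun n => ζ n * breve (h n) σa wh (αh n) wh (αh n))) :
    Finset.univ.inf' hne (fun n => ζ n * ((1 - α n ^ 2) * rfPower (h n) σa w)) ≥
      Finset.univ.inf' hne (fun n => ζ n * ((1 - αh n ^ 2) * rfPower (h n) σa wh)) := by
  have one_sub_sq_pos {x : ℝ} (hx : x ∈ Set.Ioo (0 : ℝ) 1) : 0 < 1 - x ^ 2 := by
    nlinarith [hx.1, hx.2]
  refine Finset.inf'_le_inf'_of_minorant hne (fun n _ => ?_) (fun n _ => ?_) hsur
  · exact mul_le_mul_of_nonneg_left (breve_le _ _ _ _ _ (one_sub_sq_pos (hα n))) (hζ n)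
  · rw [breve_self _ _ _ (one_sub_sq_pos (hαh n)).ne']

/-- Monotonic improvement for the max-min EH problem: if the minimum of the
surrogate per-user harvested energies at `(w, α)` is at least its value at the
linearization point `(wh, αh)`, then the minimum of the true per-user harvested
energies at `(w, α)` is at least its value at `(wh, αh)`. -/
theorem maxmin_eh_monotone_improvement (M N N₁ : ℕ) (hM : 0 < M) (hN : 0 < N)
    (hN₁ : 0 < N₁) (hle : N₁ ≤ N)
    (h : Fin N₁ → Fin M → ℂ) (ζ : Fin N₁ → ℝ) (hζ : ∀ n, 0 ≤ ζ n) (σa : ℝ)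
    (wh : Fin N → Fin M → ℂ) (αh : Fin N₁ → ℝ)
    (hαh : ∀ n, αh n ∈ Set.Ioo (0 : ℝ) 1)
    (w : Fin N → Fin M → ℂ) (α : Fin N₁ → ℝ)
    (hα : ∀ n, α n ∈ Set.Ioo (0 : ℝ) 1)
    (hne : (Finset.univ : Finset (Fin N₁)).Nonempty)
    (hsur : Finset.univ.inf' hne (fun n => ζ n * breve (h n) σa wh (αh n) w (α n)) ≥
            Finset.univ.inf' hne (fun n => ζ n * breve (h n) σa wh (αh n) wh (αh n))) :
    Finset.univ.inf' hne (fun n => ζ n * ((1 - α n ^ 2) * rfPower (h n) σa w)) ≥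
      Finset.univ.inf' hne (fun n => ζ n * ((1 - αh n ^ 2) * rfPower (h n) σa wh)) :=
  maxmin_eh_monotone_improvement_general M N N₁ h ζ hζ σa wh αh hαh w α hα hne hsur
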